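/- arXiv:1401.6618 — 3 statements merged into one kernel-verified Lean document; each statement's English description precedes it below -/
import Mathlib

section
/- For a finite field F with |F| ≥ 3, the Jacobson graph of ℤ/2 ⊕ F is not Hamiltonian. -/
/-!
The vertex `(0, 1)` of the Jacobson graph of `ℤ/2 × F` has `(1, 1)` as its only neighbour,
because `1 - (0, 1) * (a, b) = (1, 1 - b)` is a unit unless `b = 1`. A vertex of degree at most
one cannot lie on a cycle: the cycle would enter and leave it through two distinct neighbours.
-/

open scoped Classical

/-- The Jacobson graph of a commutative ring `R`. -/
def jacobsonGraph (R : Type*) [CommRing R] :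
    SimpleGraph {x : R // x ∉ Ideal.jacobson (⊥ : Ideal R)} where
  Adj x y := x ≠ y ∧ ¬ IsUnit (1 - (x : R) * y)
  symm := ⟨by
    rintro x y ⟨h1, h2⟩
    exact ⟨h1.symm, by rwa [mul_comm] at h2⟩⟩
  loopless := ⟨fun x ⟨h, _⟩ => h rfl⟩

namespace SimpleGraph

theorem IsHamiltonian.neighborSet_nontrivial {V : Type*} [Fintype V] [DecidableEq V]
    [Nontrivial V] {G : SimpleGraph V} (hG : G.IsHamiltonian) (v : V) :
    (G.neighborSet v).Nontrivial := by
  obtain ⟨p, hp⟩ := hG.exists_isHamiltonianCycle v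
  have hnil : ¬ p.Nil := hp.isCycle.not_nil
  exact ⟨p.snd, p.adj_snd hnil, p.penultimate, (p.adj_penultimate hnil).symm,
    hp.isCycle.snd_ne_penultimate⟩

end SimpleGraph

theorem Prod.mk_one_notMem_jacobson_bot {R S : Type*} [CommRing R] [CommRing S] [Nontrivial S]
    (a : R) : ((a, 1) : R × S) ∉ Ideal.jacobson (⊥ : Ideal (R × S)) := by
  intro h
  have hunit := (RingHom.snd R S).isUnit_map (Ideal.mem_jacobson_bot.1 h (0, -1))
  simp at hunit

theorem jacobsonGraph_prod_field_adj_zero_one_iff {R F : Type*} [CommRing R] [Field F]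
    (hv : ((0, 1) : R × F) ∉ Ideal.jacobson ⊥)
    (y : {x : R × F // x ∉ Ideal.jacobson ⊥}) :
    (jacobsonGraph (R × F)).Adj ⟨(0, 1), hv⟩ y ↔ (y : R × F).1 ≠ 0 ∧ (y : R × F).2 = 1 := by
  obtain ⟨⟨a, b⟩, hy⟩ := y
  have hunit : IsUnit (1 - ((0, 1) : R × F) * (a, b)) ↔ b ≠ 1 := by
    simp [Prod.isUnit_iff, eq_comm, eq_sub_iff_add_eq]
  simp only [jacobsonGraph, ne_eq, Subtype.mk.injEq, Prod.mk.injEq, hunit, not_not]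
  constructor
  · rintro ⟨hne, rfl⟩
    exact ⟨fun ha => hne ⟨ha.symm, rfl⟩, rfl⟩
  · rintro ⟨ha, rfl⟩
    exact ⟨fun h => ha h.1.symm, rfl⟩

theorem jacobsonGraph_zmod2_field_not_isHamiltonian_general
    (F : Type*) [Field F] [Finite F] :
    haveI : Fintype {x : ZMod 2 × F // x ∉ Ideal.jacobson (⊥ : Ideal (ZMod 2 × F))} :=
      Fintype.ofFinite _
    ¬ (jacobsonGraph (ZMod 2 × F)).IsHamiltonian := by
  intro hG
  let v : {x : ZMod 2 × F // x ∉ Ideal.jacobson ⊥} := ⟨(0, 1), Prod.mk_one_notMem_jacobson_bot 0⟩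
  let w : {x : ZMod 2 × F // x ∉ Ideal.jacobson ⊥} := ⟨(1, 1), Prod.mk_one_notMem_jacobson_bot 1⟩
  have hvw : v ≠ w := fun h => zero_ne_one (congrArg (·.1.1) h)
  have hunique : ∀ y ∈ (jacobsonGraph (ZMod 2 × F)).neighborSet v, y = w := by
    intro ⟨⟨a, b⟩, hy⟩ hadj
    obtain ⟨ha, rfl⟩ := (jacobsonGraph_prod_field_adj_zero_one_iff _ _).1 hadj
    obtain rfl : a = 1 := (by decide : ∀ x : ZMod 2, x ≠ 0 → x = 1) a ha
    rfl
  let _ : Fintype {x : ZMod 2 × F // x ∉ Ideal.jacobson ⊥} := Fintype.ofFinite _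
  have : Nontrivial {x : ZMod 2 × F // x ∉ Ideal.jacobson ⊥} := ⟨⟨v, w, hvw⟩⟩
  obtain ⟨y, hy, z, hz, hyz⟩ := hG.neighborSet_nontrivial v
  exact hyz ((hunique y hy).trans (hunique z hz).symm)

/-- For a finite field F with |F| ≥ 3, the Jacobson graph of ℤ/2 ⊕ F is
not Hamiltonian. -/
theorem jacobsonGraph_zmod2_field_not_isHamiltonian
    (F : Type*) [Field F] [Finite F] (hF : 3 ≤ Nat.card F) :
    haveI : Fintype {x : ZMod 2 × F // x ∉ Ideal.jacobson (⊥ : Ideal (ZMod 2 × F))} :=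
      Fintype.ofFinite _
    ¬ (jacobsonGraph (ZMod 2 × F)).IsHamiltonian :=
  jacobsonGraph_zmod2_field_not_isHamiltonian_general F
end

section
/- The Jacobson graph of a finite commutative local ring R with maximal ideal m and residue field F = R/m is a disjoint union of complete graphs and complete bipartite graphs; in particular, the vertices 1 + m form a clique (complete subgraph) of size |m|. -/
/-! The vertices are the units of `R`, and `1 - xy ∈ m` says exactly that the residues satisfy
`x̄ ȳ = 1` in `F`. So the vertices reachable from `v` are those with `ȳ ∈ {v̄, v̄⁻¹}`: two vertices
with the same residue are joined through any lift of `v̄⁻¹`. The component of `v` is therefore a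
clique when `v̄² = 1` and otherwise complete bipartite between the residue classes of `v̄` and
`v̄⁻¹`; the vertices in `1 + m` form the class of `1`. -/

open scoped Classical

namespace jacobsonGraph

open IsLocalRing SimpleGraph

variable {R : Type*} [CommRing R] [IsLocalRing R]

theorem notMem_jacobson_bot_iff (r : R) :
    r ∉ Ideal.jacobson (⊥ : Ideal R) ↔ residue R r ≠ 0 := by
  rw [jacobson_eq_maximalIdeal ⊥ bot_ne_top, Ne, residue_eq_zero_iff]

theorem residue_ne_zero (x : {x : R // x ∉ Ideal.jacobson (⊥ : Ideal R)}) :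
    residue R x ≠ 0 :=
  (notMem_jacobson_bot_iff _).1 x.2

theorem adj_iff {x y : {x : R // x ∉ Ideal.jacobson (⊥ : Ideal R)}} :
    (jacobsonGraph R).Adj x y ↔ x ≠ y ∧ residue R x * residue R y = 1 := by
  refine and_congr_right' ?_
  rw [← mem_nonunits_iff, ← mem_maximalIdeal, ← residue_eq_zero_iff, map_sub, map_one, map_mul,
    sub_eq_zero, eq_comm]

theorem exists_residue_eq_inv (x : {x : R // x ∉ Ideal.jacobson (⊥ : Ideal R)}) :
    ∃ w : {x : R // x ∉ Ideal.jacobson (⊥ : Ideal R)}, residue R w = (residue R x)⁻¹ := by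
  obtain ⟨r, hr⟩ := residue_surjective (residue R x)⁻¹
  exact ⟨⟨r, (notMem_jacobson_bot_iff r).2 (hr ▸ inv_ne_zero (residue_ne_zero x))⟩, hr⟩

theorem reachable_of_residue_mul_eq_one {x y : {x : R // x ∉ Ideal.jacobson (⊥ : Ideal R)}}
    (h : residue R x * residue R y = 1) : (jacobsonGraph R).Reachable x y := by
  by_cases hxy : x = y
  · exact hxy ▸ Reachable.refl x
  · exact (adj_iff.2 ⟨hxy, h⟩).reachable

theorem residue_eq_or_eq_inv_of_reachable {x y : {x : R // x ∉ Ideal.jacobson (⊥ : Ideal R)}}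
    (h : (jacobsonGraph R).Reachable x y) :
    residue R y = residue R x ∨ residue R y = (residue R x)⁻¹ := by
  obtain ⟨p⟩ := h
  induction p with
  | nil => exact Or.inl rfl
  | cons hadj _ ih =>
    rw [eq_inv_of_mul_eq_one_right (adj_iff.1 hadj).2, inv_inv] at ih
    exact ih.symm

theorem reachable_iff {x y : {x : R // x ∉ Ideal.jacobson (⊥ : Ideal R)}} :
    (jacobsonGraph R).Reachable x y ↔
      residue R y = residue R x ∨ residue R y = (residue R x)⁻¹ := by
  refine ⟨residue_eq_or_eq_inv_of_reachable, ?_⟩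
  rintro (h | h)
  · obtain ⟨w, hw⟩ := exists_residue_eq_inv x
    have hxw : residue R x * residue R w = 1 := hw ▸ mul_inv_cancel₀ (residue_ne_zero x)
    exact (reachable_of_residue_mul_eq_one hxw).trans
      (reachable_of_residue_mul_eq_one (h ▸ mul_comm (residue R x) _ ▸ hxw))
  · exact reachable_of_residue_mul_eq_one (h ▸ mul_inv_cancel₀ (residue_ne_zero x))

theorem mem_supp_connectedComponentMk_iff {v x : {x : R // x ∉ Ideal.jacobson (⊥ : Ideal R)}} :
    x ∈ ((jacobsonGraph R).connectedComponentMk v).supp ↔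
      residue R x = residue R v ∨ residue R x = (residue R v)⁻¹ := by
  rw [ConnectedComponent.mem_supp_iff, ConnectedComponent.eq, reachable_comm, reachable_iff]

theorem isClique_setOf_residue_eq {a : ResidueField R} (ha : a * a = 1) :
    (jacobsonGraph R).IsClique {x | residue R x = a} := by
  intro x hx y hy hxy
  exact adj_iff.2 ⟨hxy, by rw [hx, hy, ha]⟩

theorem adj_iff_of_residue_mem {a : ResidueField R} (ha₀ : a ≠ 0) (ha : a * a ≠ 1)
    {x y : {x : R // x ∉ Ideal.jacobson (⊥ : Ideal R)}}
    (hx : residue R x = a ∨ residue R x = a⁻¹) (hy : residue R y = a ∨ residue R y = a⁻¹) :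
    (jacobsonGraph R).Adj x y ↔
      (residue R x = a ∧ residue R y = a⁻¹) ∨ (residue R x = a⁻¹ ∧ residue R y = a) := by
  have ha' : a⁻¹ * a⁻¹ ≠ 1 := by rwa [← mul_inv, Ne, inv_eq_one]
  have hne : a ≠ a⁻¹ := fun h => ha ((mul_eq_one_iff_eq_inv₀ ha₀).2 h)
  rw [adj_iff]
  constructor
  · rintro ⟨-, hxy⟩
    rcases hx with hx | hx <;> rcases hy with hy | hy <;> simp_all
  · rintro (⟨hx, hy⟩ | ⟨hx, hy⟩)
    · exact ⟨by rintro rfl; exact hne (hx.symm.trans hy), by rw [hx, hy, mul_inv_cancel₀ ha₀]⟩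
    · exact ⟨by rintro rfl; exact hne (hy.symm.trans hx), by rw [hx, hy, inv_mul_cancel₀ ha₀]⟩

theorem ncard_setOf_sub_one_mem :
    {x : {x : R // x ∉ Ideal.jacobson (⊥ : Ideal R)} |
      (x : R) - 1 ∈ maximalIdeal R}.ncard = Nat.card (maximalIdeal R) := by
  have one_add_notMem (a : maximalIdeal R) : 1 + (a : R) ∉ Ideal.jacobson (⊥ : Ideal R) := by
    rw [notMem_jacobson_bot_iff, map_add, map_one, (residue_eq_zero_iff _).2 a.2, add_zero]
    exact one_ne_zero
  rw [← Nat.card_coe_set_eq]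
  exact Nat.card_congr
    { toFun x := ⟨(x : R) - 1, x.2⟩
      invFun a := ⟨⟨1 + a, one_add_notMem a⟩,
        show 1 + (a : R) - 1 ∈ _ by rw [add_sub_cancel_left]; exact a.2⟩
      left_inv _ := by ext; simp
      right_inv _ := by ext; simp }

end jacobsonGraph

open IsLocalRing SimpleGraph jacobsonGraph in
theorem jacobsonGraph_localRing_components_general
    (R : Type*) [CommRing R] [IsLocalRing R] :
    (∀ c : (jacobsonGraph R).ConnectedComponent,
      (∀ x ∈ c.supp, ∀ y ∈ c.supp, x ≠ y → (jacobsonGraph R).Adj x y) ∨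
      (∃ s t : Set {x : R // x ∉ Ideal.jacobson (⊥ : Ideal R)},
        s ∪ t = c.supp ∧ Disjoint s t ∧
        ∀ x ∈ c.supp, ∀ y ∈ c.supp,
          ((jacobsonGraph R).Adj x y ↔ ((x ∈ s ∧ y ∈ t) ∨ (x ∈ t ∧ y ∈ s))))) ∧
    (jacobsonGraph R).IsClique
      {x : {x : R // x ∉ Ideal.jacobson (⊥ : Ideal R)} |
        (x : R) - 1 ∈ IsLocalRing.maximalIdeal R} ∧
    ({x : {x : R // x ∉ Ideal.jacobson (⊥ : Ideal R)} |
        (x : R) - 1 ∈ IsLocalRing.maximalIdeal R} : Set _).ncard =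
      Nat.card (IsLocalRing.maximalIdeal R) := by
  have hone : {x : {x : R // x ∉ Ideal.jacobson (⊥ : Ideal R)} |
      (x : R) - 1 ∈ maximalIdeal R} =
      {x : {x : R // x ∉ Ideal.jacobson (⊥ : Ideal R)} | residue R x = 1} := by
    ext x
    change (x : R) - 1 ∈ maximalIdeal R ↔ residue R x = 1
    rw [← residue_eq_zero_iff, map_sub, map_one, sub_eq_zero]
  refine ⟨ConnectedComponent.ind fun v => ?_, hone ▸ isClique_setOf_residue_eq (mul_one 1),
    ncard_setOf_sub_one_mem⟩
  simp only [mem_supp_connectedComponentMk_iff]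
  by_cases hv : residue R v * residue R v = 1
  · left
    rintro x hx y hy hxy
    rw [← eq_inv_of_mul_eq_one_left hv, or_self] at hx hy
    exact isClique_setOf_residue_eq hv hx hy hxy
  · right
    refine ⟨{x | residue R x = residue R v}, {x | residue R x = (residue R v)⁻¹},
      Set.ext fun _ => mem_supp_connectedComponentMk_iff.symm, ?_,
      fun x hx y hy => adj_iff_of_residue_mem (residue_ne_zero v) hv hx hy⟩
    exact Set.disjoint_left.2 fun x hx hx' =>
      hv ((mul_eq_one_iff_eq_inv₀ (residue_ne_zero v)).2 (hx.symm.trans hx'))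

/-- The Jacobson graph of a finite commutative local ring is a disjoint
union of complete graphs and complete bipartite graphs: every connected component is
either complete or complete bipartite.  In particular, the vertices lying in `1 + m` form
a clique of size |m|. -/
theorem jacobsonGraph_localRing_components
    (R : Type*) [CommRing R] [Finite R] [IsLocalRing R] :
    (∀ c : (jacobsonGraph R).ConnectedComponent,
      (∀ x ∈ c.supp, ∀ y ∈ c.supp, x ≠ y → (jacobsonGraph R).Adj x y) ∨
      (∃ s t : Set {x : R // x ∉ Ideal.jacobson (⊥ : Ideal R)},
        s ∪ t = c.supp ∧ Disjoint s t ∧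
        ∀ x ∈ c.supp, ∀ y ∈ c.supp,
          ((jacobsonGraph R).Adj x y ↔ ((x ∈ s ∧ y ∈ t) ∨ (x ∈ t ∧ y ∈ s))))) ∧
    (jacobsonGraph R).IsClique
      {x : {x : R // x ∉ Ideal.jacobson (⊥ : Ideal R)} |
        (x : R) - 1 ∈ IsLocalRing.maximalIdeal R} ∧
    ({x : {x : R // x ∉ Ideal.jacobson (⊥ : Ideal R)} |
        (x : R) - 1 ∈ IsLocalRing.maximalIdeal R} : Set _).ncard =
      Nat.card (IsLocalRing.maximalIdeal R) :=
  jacobsonGraph_localRing_components_general R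
end

section
/- For the ring R = ℤ/3 ⊕ ℤ/3, the longest induced cycle in the Jacobson graph of R has length 4. -/
open scoped Classical

/-- An induced (chordless) cycle in a simple graph. -/
def IsInducedCycle {V : Type*} {G : SimpleGraph V} {u : V} (p : G.Walk u u) : Prop :=
  p.IsCycle ∧ ∀ x ∈ p.support, ∀ y ∈ p.support, G.Adj x y → s(x, y) ∈ p.edges

/-- An induced (chordless) path in a simple graph. -/
def IsInducedPath {V : Type*} {G : SimpleGraph V} {u v : V} (p : G.Walk u v) : Prop :=
  p.IsPath ∧ ∀ x ∈ p.support, ∀ y ∈ p.support, G.Adj x y → s(x, y) ∈ p.edges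

/-! If a vertex of an induced cycle has a clique as neighbourhood, its two neighbours on the
cycle are adjacent, and since the chord between them must be an edge of the cycle, the cycle
is a triangle. In the Jacobson graph of `ℤ/3 × ℤ/3` every non-unit vertex has a clique as
neighbourhood: the neighbours of `(a, 0)` are `(a, 1)` and `(a, 2)`, adjacent because `a² = 1`.
So an induced cycle of length at least 4 runs through the four units only, and
`(1,1), (1,2), (2,2), (2,1)` is indeed a chordless 4-cycle. -/

open SimpleGraph

namespace SimpleGraph.Walk

variable {V : Type*} {G : SimpleGraph V}

lemma IsCycle.length_eq_three_of_mem_edges {u : V} {p : G.Walk u u} (hp : p.IsCycle)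
    (h : s(p.snd, p.penultimate) ∈ p.edges) : p.length = 3 := by
  have hnil := hp.not_nil
  have hlen := hp.three_le_length
  have hpen : p.penultimate ≠ u := (p.adj_penultimate hnil).ne
  have htail : s(p.snd, p.penultimate) ∈ p.tail.edges := by
    have hedges : p.edges = s(u, p.snd) :: p.tail.edges := by
      conv_lhs => rw [← p.cons_tail_eq hnil]
      rfl
    rw [hedges, List.mem_cons] at h
    refine h.resolve_left fun he => ?_
    rcases Sym2.eq_iff.mp he with ⟨-, h'⟩ | ⟨-, h'⟩
    · exact hp.snd_ne_penultimate h'.symm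
    · exact hpen h'
  have hpen_eq : p.penultimate = p.getVert 2 := by
    simpa using hp.isPath_tail.eq_snd_of_mem_edges htail
  have := hp.getVert_injOn (by simp; omega) (by simp; omega) hpen_eq
  omega

lemma IsCycle.length_le_card {u : V} {p : G.Walk u u} (hp : p.IsCycle) {s : Finset V}
    (hs : ∀ v ∈ p.support, v ∈ s) : p.length ≤ s.card :=
  calc p.length = p.support.tail.toFinset.card := by
        rw [List.toFinset_card_of_nodup hp.support_nodup, List.length_tail, length_support]; rfl
    _ ≤ s.card :=
        Finset.card_le_card fun v hv => hs v (List.mem_of_mem_tail (List.mem_toFinset.mp hv))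

end SimpleGraph.Walk

section InducedCycle

variable {V : Type*} {G : SimpleGraph V}

lemma IsInducedCycle.rotate [DecidableEq V] {u v : V} {p : G.Walk u u} (hp : IsInducedCycle p)
    (hv : v ∈ p.support) : IsInducedCycle (p.rotate v hv) := by
  refine ⟨hp.1.rotate hv, fun x hx y hy hxy => ?_⟩
  rw [Walk.mem_support_rotate_iff] at hx hy
  exact (p.rotate_edges v hv).mem_iff.mpr (hp.2 x hx y hy hxy)

lemma IsInducedCycle.length_eq_three_of_isClique_neighborSet {u v : V} {p : G.Walk u u}
    (hp : IsInducedCycle p) (hv : v ∈ p.support) (hclique : G.IsClique (G.neighborSet v)) :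
    p.length = 3 := by
  set q := p.rotate v hv
  have hq : IsInducedCycle q := hp.rotate hv
  have hnil := hq.1.not_nil
  have hadj : G.Adj q.snd q.penultimate :=
    hclique (q.adj_snd hnil) (q.adj_penultimate hnil).symm hq.1.snd_ne_penultimate
  rw [← p.length_rotate v hv]
  exact hq.1.length_eq_three_of_mem_edges <|
    hq.2 _ (q.getVert_mem_support 1) _ (q.getVert_mem_support _) hadj

end InducedCycle

lemma notMem_jacobson_bot_of_isUnit {R : Type*} [CommRing R] [Nontrivial R] {x : R}
    (hx : IsUnit x) : x ∉ Ideal.jacobson (⊥ : Ideal R) := fun hmem =>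
  bot_ne_top (Ideal.jacobson_eq_top_iff.mp (Ideal.eq_top_of_isUnit_mem _ hmem hx))

lemma jacobsonGraph_prod_adj_iff {K L : Type*} [Field K] [Field L]
    {x y : {x : K × L // x ∉ Ideal.jacobson (⊥ : Ideal (K × L))}} :
    (jacobsonGraph (K × L)).Adj x y ↔
      x ≠ y ∧ ((x : K × L).1 * (y : K × L).1 = 1 ∨ (x : K × L).2 * (y : K × L).2 = 1) := by
  change x ≠ y ∧ _ ↔ _
  rw [Prod.isUnit_iff, isUnit_iff_ne_zero, isUnit_iff_ne_zero]
  simp only [Prod.fst_sub, Prod.snd_sub, Prod.fst_mul, Prod.snd_mul, Prod.fst_one, Prod.snd_one,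
    sub_ne_zero, not_and_or, not_not, eq_comm (a := (1 : K)), eq_comm (a := (1 : L))]

local notation "R₃" => ZMod 3 × ZMod 3
local notation "V₃" => {x : R₃ // x ∉ Ideal.jacobson (⊥ : Ideal R₃)}

lemma card_filter_isUnit_le : (Finset.univ.filter fun v : V₃ => IsUnit (v : R₃)).card ≤ 4 :=
  calc _ ≤ (Finset.univ.filter (IsUnit : R₃ → Prop)).card :=
        Finset.card_le_card_of_injOn Subtype.val (fun v hv => by simpa using hv)
          Subtype.val_injective.injOn
    _ = 4 := by decide

lemma isClique_neighborSet_of_not_isUnit {t : V₃} (ht : ¬ IsUnit (t : R₃)) :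
    (jacobsonGraph R₃).IsClique ((jacobsonGraph R₃).neighborSet t) := by
  intro y hy z hz hyz
  simp only [mem_neighborSet, jacobsonGraph_prod_adj_iff] at hy hz ⊢
  have key : ∀ t y z : R₃, ¬ IsUnit t → (t.1 * y.1 = 1 ∨ t.2 * y.2 = 1) →
      (t.1 * z.1 = 1 ∨ t.2 * z.2 = 1) → y ≠ z → (y.1 * z.1 = 1 ∨ y.2 * z.2 = 1) := by
    decide
  exact ⟨hyz, key _ _ _ ht hy.2 hz.2 (Subtype.val_injective.ne hyz)⟩

def unitVertex (x : R₃) (hx : IsUnit x) : V₃ :=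
  ⟨x, notMem_jacobson_bot_of_isUnit hx⟩

lemma unitVertex_adj (x y : R₃) {hx : IsUnit x} {hy : IsUnit y}
    (h : x ≠ y ∧ (x.1 * y.1 = 1 ∨ x.2 * y.2 = 1)) :
    (jacobsonGraph R₃).Adj (unitVertex x hx) (unitVertex y hy) :=
  jacobsonGraph_prod_adj_iff.mpr ⟨fun hxy => h.1 (congrArg Subtype.val hxy), h.2⟩

def unitSquare :
    (jacobsonGraph R₃).Walk (unitVertex (1, 1) (by decide)) (unitVertex (1, 1) (by decide)) :=
  .cons (unitVertex_adj (1, 1) (1, 2) (hy := by decide) (by decide)) <|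
  .cons (unitVertex_adj (1, 2) (2, 2) (hy := by decide) (by decide)) <|
  .cons (unitVertex_adj (2, 2) (2, 1) (hy := by decide) (by decide)) <|
  .cons (unitVertex_adj (2, 1) (1, 1) (by decide)) .nil

lemma isInducedCycle_unitSquare : IsInducedCycle unitSquare := by
  refine ⟨(Walk.cons_isCycle_iff _ _).mpr ⟨(Walk.isPath_def _).mpr (by decide), by decide⟩,
    fun x hx y hy hxy => ?_⟩
  simp only [unitSquare, Walk.support_cons, Walk.support_nil, List.mem_cons,
    List.not_mem_nil, or_false] at hx hy
  rw [jacobsonGraph_prod_adj_iff] at hxy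
  rcases hx with rfl | rfl | rfl | rfl | rfl <;> rcases hy with rfl | rfl | rfl | rfl | rfl <;>
    revert hxy <;> decide

/-- The longest induced cycle in the Jacobson graph of ℤ/3 ⊕ ℤ/3 has
length 4. -/
theorem jacobsonGraph_zmod3_zmod3_longest_induced_cycle :
    (∃ (u : {x : ZMod 3 × ZMod 3 // x ∉ Ideal.jacobson (⊥ : Ideal (ZMod 3 × ZMod 3))})
      (p : (jacobsonGraph (ZMod 3 × ZMod 3)).Walk u u),
        IsInducedCycle p ∧ p.length = 4) ∧
    ∀ (u : {x : ZMod 3 × ZMod 3 // x ∉ Ideal.jacobson (⊥ : Ideal (ZMod 3 × ZMod 3))})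
      (p : (jacobsonGraph (ZMod 3 × ZMod 3)).Walk u u),
        IsInducedCycle p → p.length ≤ 4 := by
  refine ⟨⟨_, unitSquare, isInducedCycle_unitSquare, rfl⟩, fun u p hp => ?_⟩
  by_cases h3 : p.length = 3
  · omega
  have hunits : ∀ v ∈ p.support, v ∈ Finset.univ.filter fun v : V₃ => IsUnit (v : R₃) := by
    intro v hv
    by_contra hv'
    exact h3 <| hp.length_eq_three_of_isClique_neighborSet hv <|
      isClique_neighborSet_of_not_isUnit (by simpa using hv')
  exact (hp.1.length_le_card hunits).trans card_filter_isUnit_le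
end
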